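/- arXiv:2108.06392 — 7 statements merged into one kernel-verified Lean document; each statement's English description precedes it below -/
import Mathlib

section
/- In a semiprime Archimedean f-algebra A, an element f satisfies 0 ≤ π_f ≤ I in Orth(A) (i.e., 0 ≤ f·g ≤ g for all 0 ≤ g ∈ A) if and only if 0 ≤ f and f² ≤ f. -/
/-!
If `0 ≤ f * g ≤ g` for all `g ≥ 0`, then testing with `g = f⁻` gives
`0 ≤ f * f⁻ = -(f⁻)²` (as `f⁺ f⁻ = 0`), so `f⁻ = 0` by semiprimeness.
Conversely, put `u = f g - g`; then `f u = (f² - f) g ≤ 0`, which forces `f (u⁺)² = 0`,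
and `0 ≤ u⁺ ≤ f g` gives `(u⁺)³ ≤ g · f (u⁺)² = 0`, so `u⁺ = 0` by semiprimeness.
-/

/-- An Archimedean semiprime f-algebra (possibly non-unital, commutative). -/
class SemiprimeFRing (A : Type*) extends NonUnitalCommRing A, Lattice A where
  add_le_add_left : ∀ a b : A, a ≤ b → ∀ c : A, c + a ≤ c + b
  mul_nonneg : ∀ a b : A, 0 ≤ a → 0 ≤ b → 0 ≤ a * b
  disjoint_mul_left : ∀ a b c : A, a ⊓ b = 0 → 0 ≤ c → (c * a) ⊓ b = 0
  semiprime : ∀ a : A, a * a = 0 → a = 0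
  arch : ∀ a b : A, (∀ n : ℕ, n • a ≤ b) → a ≤ 0

section

variable {A : Type*} [SemiprimeFRing A]

instance : AddLeftMono A :=
  ⟨fun c _ _ h => SemiprimeFRing.add_le_add_left _ _ h c⟩

instance : PosMulMono A where
  mul_le_mul_of_nonneg_left c hc a b h := by
    have : 0 ≤ c * (b - a) := SemiprimeFRing.mul_nonneg _ _ hc (sub_nonneg.mpr h)
    rwa [mul_sub, sub_nonneg] at this

instance : MulPosMono A where
  mul_le_mul_of_nonneg_right c hc a b h := by
    simpa only [mul_comm _ c] using mul_le_mul_of_nonneg_left h hc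

theorem mul_eq_zero_of_inf_eq_zero {a b : A} (h : a ⊓ b = 0) : a * b = 0 := by
  have hab : a * b ⊓ a = 0 :=
    SemiprimeFRing.disjoint_mul_left b a a (inf_comm a b ▸ h) (h ▸ inf_le_left)
  have hba : b * a ⊓ a * b = 0 :=
    SemiprimeFRing.disjoint_mul_left a (a * b) b (inf_comm (a * b) a ▸ hab) (h ▸ inf_le_right)
  rwa [mul_comm b a, inf_idem] at hba

theorem posPart_mul_negPart (a : A) : a⁺ * a⁻ = 0 :=
  mul_eq_zero_of_inf_eq_zero (posPart_inf_negPart_eq_zero a)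

theorem eq_zero_of_mul_mul_self_eq_zero {a : A} (h : a * (a * a) = 0) :
    a = 0 := by
  refine SemiprimeFRing.semiprime a (SemiprimeFRing.semiprime _ ?_)
  rw [mul_assoc, ← mul_assoc a a a, mul_comm (a * a) a, h, mul_zero]

theorem nonneg_of_mul_negPart_nonneg {f : A} (h : 0 ≤ f * f⁻) : 0 ≤ f := by
  have hsq : f * f⁻ = -(f⁻ * f⁻) := calc
    f * f⁻ = (f⁺ - f⁻) * f⁻ := by rw [posPart_sub_negPart]
    _ = -(f⁻ * f⁻) := by rw [sub_mul, posPart_mul_negPart, zero_sub]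
  have hneg : f⁻ = 0 := SemiprimeFRing.semiprime _ <|
    le_antisymm (neg_nonneg.mp (hsq ▸ h)) (mul_nonneg (negPart_nonneg f) (negPart_nonneg f))
  rw [← posPart_sub_negPart f, hneg, sub_zero]
  exact posPart_nonneg f

theorem mul_posPart_mul_self_eq_zero {f u : A} (hf : 0 ≤ f) (hfu : f * u ≤ 0) :
    f * (u⁺ * u⁺) = 0 := by
  have hcomm : u⁺ * (f * u) = f * (u⁺ * u⁺) := calc
    u⁺ * (f * u) = u⁺ * (f * (u⁺ - u⁻)) := by rw [posPart_sub_negPart]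
    _ = f * (u⁺ * u⁺) := by
      rw [mul_sub, mul_sub, mul_left_comm u⁺ f u⁺, mul_left_comm u⁺ f u⁻, posPart_mul_negPart,
        mul_zero, sub_zero]
  refine le_antisymm ?_ (mul_nonneg hf (mul_nonneg (posPart_nonneg u) (posPart_nonneg u)))
  exact hcomm ▸ mul_nonpos_of_nonneg_of_nonpos (posPart_nonneg u) hfu

theorem nonpos_of_mul_nonpos_of_le_mul {f g u : A} (hf : 0 ≤ f) (hg : 0 ≤ g)
    (hfu : f * u ≤ 0) (hu : u ≤ f * g) : u ≤ 0 := by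
  have hp : 0 ≤ u⁺ := posPart_nonneg u
  have hle : u⁺ ≤ f * g := by
    rw [posPart_def]
    exact sup_le hu (mul_nonneg hf hg)
  have hcube : u⁺ * (u⁺ * u⁺) = 0 := by
    refine le_antisymm ?_ (mul_nonneg hp (mul_nonneg hp hp))
    calc u⁺ * (u⁺ * u⁺) ≤ f * g * (u⁺ * u⁺) := mul_le_mul_of_nonneg_right hle (mul_nonneg hp hp)
      _ = g * (f * (u⁺ * u⁺)) := by rw [mul_comm f g, mul_assoc]
      _ = 0 := by rw [mul_posPart_mul_self_eq_zero hf hfu, mul_zero]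
  exact posPart_eq_zero.mp (eq_zero_of_mul_mul_self_eq_zero hcube)

end

/-- In a semiprime Archimedean f-algebra `A`, an element `f` satisfies
`0 ≤ π_f ≤ I` in `Orth(A)` (i.e. `0 ≤ f*g ≤ g` for all `0 ≤ g`)
iff `0 ≤ f` and `f² ≤ f`. -/
theorem stmt0 {A : Type*} [SemiprimeFRing A] (f : A) :
    (∀ g : A, 0 ≤ g → 0 ≤ f * g ∧ f * g ≤ g) ↔ (0 ≤ f ∧ f * f ≤ f) := by
  constructor
  · intro h
    have hf : 0 ≤ f := nonneg_of_mul_negPart_nonneg (h f⁻ (negPart_nonneg f)).1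
    exact ⟨hf, (h f hf).2⟩
  · rintro ⟨hf, hsq⟩ g hg
    have hfu : f * (f * g - g) ≤ 0 := by
      rw [mul_sub, ← mul_assoc, sub_nonpos]
      exact mul_le_mul_of_nonneg_right hsq hg
    exact ⟨mul_nonneg hf hg, sub_nonpos.mp <|
      nonpos_of_mul_nonpos_of_le_mul hf hg hfu (sub_le_self _ hg)⟩
end

section
/- Let A be a unital Archimedean f-algebra with unit e and B an Archimedean semiprime f-algebra. Every regular separating (disjointness preserving) operator T : A → B is almost contractive, and ω_T = |T(e)|; that is, |T(f)| ≤ |T(e)| for all f ∈ A with |f| ≤ e. -/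
/-- An Archimedean (semiprime) f-algebra with a unit element. -/
class SemiprimeFRing1 (A : Type*) extends CommRing A, Lattice A where
  add_le_add_left : ∀ a b : A, a ≤ b → ∀ c : A, c + a ≤ c + b
  mul_nonneg : ∀ a b : A, 0 ≤ a → 0 ≤ b → 0 ≤ a * b
  disjoint_mul_left : ∀ a b c : A, a ⊓ b = 0 → 0 ≤ c → (c * a) ⊓ b = 0
  semiprime : ∀ a : A, a * a = 0 → a = 0
  arch : ∀ a b : A, (∀ n : ℕ, n • a ≤ b) → a ≤ 0

open Finset

section LatticeOrderedGroup

variable {α : Type*} [Lattice α] [AddCommGroup α] [AddLeftMono α]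

lemma abs_sum_le_sum_abs_of_lattice {ι : Type*} (s : Finset ι) (f : ι → α) :
    |∑ i ∈ s, f i| ≤ ∑ i ∈ s, |f i| := by
  induction s using Finset.cons_induction with
  | empty => simp
  | cons i s _ ih =>
    rw [sum_cons, sum_cons]
    exact (abs_add_le _ _).trans (by gcongr)

lemma inf_add_le_inf_add_inf {a b c : α} (ha : 0 ≤ a) (hb : 0 ≤ b) (hc : 0 ≤ c) :
    a ⊓ (b + c) ≤ a ⊓ b + a ⊓ c := by
  rw [← sub_le_iff_le_add']
  refine le_inf ((sub_le_self _ (le_inf ha hb)).trans inf_le_left) ?_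
  rw [sub_le_iff_le_add', inf_add]
  exact inf_le_inf_right _ (le_add_of_nonneg_right hc)

lemma inf_sum_eq_zero {ι : Type*} {a : α} {s : Finset ι} {f : ι → α} (ha : 0 ≤ a)
    (hf : ∀ i ∈ s, 0 ≤ f i) (h : ∀ i ∈ s, a ⊓ f i = 0) : a ⊓ ∑ i ∈ s, f i = 0 := by
  induction s using Finset.cons_induction with
  | empty => simpa using ha
  | cons i s _ ih =>
    simp only [mem_cons, forall_eq_or_imp] at hf h
    rw [sum_cons]
    refine le_antisymm ?_ (le_inf ha (add_nonneg hf.1 (sum_nonneg hf.2)))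
    calc a ⊓ (f i + ∑ j ∈ s, f j) ≤ a ⊓ f i + a ⊓ ∑ j ∈ s, f j :=
          inf_add_le_inf_add_inf ha hf.1 (sum_nonneg hf.2)
      _ = 0 := by rw [h.1, ih hf.2 h.2, add_zero]

lemma inf_nsmul_eq_zero {a b : α} (ha : 0 ≤ a) (hb : 0 ≤ b) (h : a ⊓ b = 0) (n : ℕ) :
    a ⊓ n • b = 0 := by
  simpa using inf_sum_eq_zero (s := range n) ha (fun _ _ => hb) (fun _ _ => h)

lemma nsmul_inf_nsmul_eq_zero {a b : α} (ha : 0 ≤ a) (hb : 0 ≤ b) (h : a ⊓ b = 0) (n : ℕ) :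
    n • a ⊓ n • b = 0 := by
  have hb' : n • b ⊓ a = 0 := by rw [inf_comm]; exact inf_nsmul_eq_zero ha hb h n
  rw [inf_comm]
  exact inf_nsmul_eq_zero (nsmul_nonneg hb n) ha hb' n

lemma abs_sub_eq_add_of_inf_eq_zero {a b : α} (h : a ⊓ b = 0) : |a - b| = a + b := by
  have hpos : (a - b)⁺ = a :=
    (sub_eq_zero.1 (h ▸ inf_eq_sub_posPart_sub a b).symm).symm
  have hneg : (a - b)⁻ = b := by
    rw [← posPart_neg, neg_sub]
    exact (sub_eq_zero.1 ((inf_comm a b ▸ h) ▸ inf_eq_sub_posPart_sub b a).symm).symm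
  rw [← posPart_add_negPart, hpos, hneg]

lemma abs_nsmul_eq_nsmul_abs (n : ℕ) (x : α) : |n • x| = n • |x| := by
  calc |n • x| = |n • x⁺ - n • x⁻| := by rw [← nsmul_sub, posPart_sub_negPart]
    _ = n • x⁺ + n • x⁻ := abs_sub_eq_add_of_inf_eq_zero <|
        nsmul_inf_nsmul_eq_zero (posPart_nonneg x) (negPart_nonneg x)
          (posPart_inf_negPart_eq_zero x) n
    _ = n • |x| := by rw [← nsmul_add, posPart_add_negPart]

lemma abs_sub_le_sup_of_inf_eq_zero {x y : α} (h : |x| ⊓ |y| = 0) : |x - y| ≤ |x| ⊔ |y| :=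
  calc |x - y| ≤ |x| + |y| := by simpa [sub_eq_add_neg] using abs_add_le x (-y)
    _ = |x| ⊓ |y| + |x| ⊔ |y| := (inf_add_sup _ _).symm
    _ = |x| ⊔ |y| := by rw [h, zero_add]

lemma abs_add_le_sup_abs_add_add {x y : α} (h : |x| ⊓ |y| = 0) (c : α) :
    |c + x| ≤ |c| ⊔ |c + x + y| := by
  set m := |c| ⊔ |c + x + y|
  have hx : |c + x| ≤ |x| + m :=
    calc |c + x| ≤ |x| + |c| := by rw [add_comm c]; exact abs_add_le x c
      _ ≤ |x| + m := by gcongr; exact le_sup_left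
  have hy : |c + x| ≤ |y| + m :=
    calc |c + x| = |(c + x + y) + -y| := by rw [add_neg_cancel_right]
      _ ≤ |c + x + y| + |y| := (abs_add_le _ _).trans_eq (by rw [abs_neg])
      _ ≤ |y| + m := by rw [add_comm]; gcongr; exact le_sup_right
  calc |c + x| ≤ (|x| + m) ⊓ (|y| + m) := le_inf hx hy
    _ = |x| ⊓ |y| + m := (inf_add _ _ _).symm
    _ = m := by rw [h, zero_add]

lemma abs_sum_range_le_nsmul_abs_add (t : ℕ → α) (s M : α) (hM : 0 ≤ M) (n : ℕ)
    (ht : ∀ k < n, |t k| ≤ M) (hdisj : ∀ k j, k < j → j < n → |t j| ⊓ |s - t k| = 0) :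
    |∑ k ∈ range n, t k| ≤ n • |s| + M := by
  induction n with
  | zero => simpa using hM
  | succ n ih =>
    set S := ∑ k ∈ range n, t k
    have hS : |S| ≤ n • |s| + M :=
      ih (fun k hk => ht k (by omega)) (fun k j hkj hj => hdisj k j hkj (by omega))
    have hdisj_n : |t n| ⊓ |n • s - S| = 0 := by
      have hsum : n • s - S = ∑ k ∈ range n, (s - t k) := by
        rw [sum_sub_distrib, sum_const, card_range]
      refine le_antisymm ?_ (le_inf (abs_nonneg _) (abs_nonneg _))
      calc |t n| ⊓ |n • s - S| ≤ |t n| ⊓ ∑ k ∈ range n, |s - t k| := by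
            rw [hsum]; exact inf_le_inf_left _ (abs_sum_le_sum_abs_of_lattice _ _)
        _ = 0 := inf_sum_eq_zero (abs_nonneg _) (fun _ _ => abs_nonneg _)
            (fun k hk => hdisj k n (mem_range.1 hk) n.lt_succ_self)
    have hlast : |n • s + t n| ≤ n • |s| + M := by
      grw [abs_add_le, abs_nsmul_eq_nsmul_abs, ht n n.lt_succ_self]
    calc |∑ k ∈ range (n + 1), t k| = |S + t n| := by rw [sum_range_succ]
      _ ≤ |S| ⊔ |S + t n + (n • s - S)| := abs_add_le_sup_abs_add_add hdisj_n S
      _ = |S| ⊔ |n • s + t n| := by congr 2; abel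
      _ ≤ n • |s| + M := sup_le hS hlast
      _ ≤ (n + 1) • |s| + M := by gcongr; exact Nat.le_succ n

lemma posPart_sub_posPart_sub {v : α} (hv : 0 ≤ v) (x : α) : (x⁺ - v)⁺ = (x - v)⁺ := by
  rw [posPart_def x, sup_sub, posPart_def, posPart_def, sup_assoc, zero_sub,
    sup_eq_right.2 (neg_nonpos.2 hv)]

lemma exists_disjoint_slices {w v : α} {n : ℕ} (hw : 0 ≤ w) (hv : 0 ≤ v) (hwv : w ≤ n • v) :
    ∃ a : ℕ → α, (∀ k, 0 ≤ a k ∧ a k ≤ v) ∧ ∑ k ∈ range n, a k = w ∧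
      ∀ k j, k < j → a j ⊓ (v - a k) = 0 := by
  set p : ℕ → α := fun k => (w - k • v)⁺
  have hp_succ : ∀ k, p (k + 1) = (p k - v)⁺ := fun k => by
    simp only [p, posPart_sub_posPart_sub hv, succ_nsmul, sub_add_eq_sub_sub]
  have hslice : ∀ k, p k ⊓ v = p k - p (k + 1) := fun k => by
    rw [hp_succ, inf_eq_sub_posPart_sub]
  have hp_anti : Antitone p := antitone_nat_of_succ_le fun k => by
    rw [← sub_nonneg, ← hslice]; exact le_inf (posPart_nonneg _) hv
  refine ⟨fun k => p k ⊓ v, fun k => ⟨le_inf (posPart_nonneg _) hv, inf_le_right⟩, ?_, ?_⟩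
  · have hp0 : p 0 = w := by simpa [p] using hw
    have hpn : p n = 0 := by simpa [p] using hwv
    simp only [hslice, sum_range_sub', hp0, hpn, sub_zero]
  · intro k j hkj
    -- `v - p k ⊓ v` and `p (k + 1)` are the positive and negative parts of `v - p k`
    have hcompl : (v - p k ⊓ v) ⊓ p (k + 1) = 0 := by
      rw [inf_comm (p k), inf_eq_sub_posPart_sub v (p k), sub_sub_cancel, hp_succ,
        ← neg_sub v (p k), posPart_neg]
      exact posPart_inf_negPart_eq_zero (v - p k)
    refine le_antisymm ?_ (le_inf (le_inf (posPart_nonneg _) hv) (sub_nonneg.2 inf_le_right))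
    calc p j ⊓ v ⊓ (v - p k ⊓ v) ≤ p (k + 1) ⊓ (v - p k ⊓ v) :=
          inf_le_inf_right _ (inf_le_left.trans (hp_anti hkj))
      _ = 0 := by rw [inf_comm, hcompl]

end LatticeOrderedGroup

section DisjointnessPreserving

variable {G H : Type*} [Lattice G] [AddCommGroup G] [AddLeftMono G]
  [Lattice H] [AddCommGroup H] [AddLeftMono H]

lemma abs_sub_le_add_of_nonneg_of_le (P Q : G →+ H) (hP : ∀ x, 0 ≤ x → 0 ≤ P x)
    (hQ : ∀ x, 0 ≤ x → 0 ≤ Q x) {a v : G} (ha : 0 ≤ a) (hav : a ≤ v) :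
    |P a - Q a| ≤ P v + Q v := by
  have hPa : P a ≤ P v := sub_nonneg.1 (by rw [← map_sub]; exact hP _ (sub_nonneg.2 hav))
  have hQa : Q a ≤ Q v := sub_nonneg.1 (by rw [← map_sub]; exact hQ _ (sub_nonneg.2 hav))
  calc |P a - Q a| ≤ |P a| + |Q a| := by simpa [sub_eq_add_neg] using abs_add_le (P a) (-Q a)
    _ = P a + Q a := by rw [abs_of_nonneg (hP a ha), abs_of_nonneg (hQ a ha)]
    _ ≤ P v + Q v := add_le_add hPa hQa

lemma abs_map_le_abs_map_of_le (T : G →+ H) (hsep : ∀ f g, |f| ⊓ |g| = 0 → |T f| ⊓ |T g| = 0)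
    (harch : ∀ a b : H, (∀ n : ℕ, n • a ≤ b) → a ≤ 0) {u v : G} {M : H}
    (hM : ∀ a, 0 ≤ a → a ≤ v → |T a| ≤ M) (hu : 0 ≤ u) (huv : u ≤ v) : |T u| ≤ |T v| := by
  have hv : 0 ≤ v := hu.trans huv
  rw [← sub_nonpos]
  refine harch _ M fun n => ?_
  obtain ⟨a, ha, hsum, hdisj⟩ :=
    exists_disjoint_slices (nsmul_nonneg hu n) hv (nsmul_le_nsmul_right huv n)
  have hdisj' : ∀ k j, k < j → j < n → |T (a j)| ⊓ |T v - T (a k)| = 0 := by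
    intro k j hkj _
    rw [← map_sub]
    apply hsep
    rw [abs_of_nonneg (ha j).1, abs_of_nonneg (sub_nonneg.2 (ha k).2)]
    exact hdisj k j hkj
  have hbound := abs_sum_range_le_nsmul_abs_add (fun k => T (a k)) (T v) M
    ((abs_nonneg _).trans (hM 0 le_rfl hv)) n (fun k _ => hM _ (ha k).1 (ha k).2) hdisj'
  rwa [nsmul_sub, sub_le_iff_le_add', ← abs_nsmul_eq_nsmul_abs, ← map_nsmul, ← hsum, map_sum]

lemma abs_map_le_abs_map_of_abs_le (T : G →+ H)
    (hsep : ∀ f g, |f| ⊓ |g| = 0 → |T f| ⊓ |T g| = 0)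
    (harch : ∀ a b : H, (∀ n : ℕ, n • a ≤ b) → a ≤ 0) {f v : G} {M : H}
    (hM : ∀ a, 0 ≤ a → a ≤ v → |T a| ≤ M) (hf : |f| ≤ v) : |T f| ≤ |T v| := by
  have hdisj : |T f⁺| ⊓ |T f⁻| = 0 := hsep _ _ <| by
    rw [abs_of_nonneg (posPart_nonneg f), abs_of_nonneg (negPart_nonneg f)]
    exact posPart_inf_negPart_eq_zero f
  have hpos : f⁺ ≤ v := by
    rw [← posPart_add_negPart] at hf; exact (le_add_of_nonneg_right (negPart_nonneg f)).trans hf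
  have hneg : f⁻ ≤ v := by
    rw [← posPart_add_negPart] at hf; exact (le_add_of_nonneg_left (posPart_nonneg f)).trans hf
  calc |T f| = |T f⁺ - T f⁻| := by rw [← map_sub, posPart_sub_negPart]
    _ ≤ |T f⁺| ⊔ |T f⁻| := abs_sub_le_sup_of_inf_eq_zero hdisj
    _ ≤ |T v| := sup_le
        (abs_map_le_abs_map_of_le T hsep harch hM (posPart_nonneg f) hpos)
        (abs_map_le_abs_map_of_le T hsep harch hM (negPart_nonneg f) hneg)

end DisjointnessPreserving

instance (priority := 100) SemiprimeFRing.toAddLeftMono {A : Type*} [SemiprimeFRing A] :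
    AddLeftMono A :=
  ⟨fun c _ _ h => SemiprimeFRing.add_le_add_left _ _ h c⟩

instance (priority := 100) SemiprimeFRing1.toAddLeftMono {A : Type*} [SemiprimeFRing1 A] :
    AddLeftMono A :=
  ⟨fun c _ _ h => SemiprimeFRing1.add_le_add_left _ _ h c⟩

namespace SemiprimeFRing1

variable {A : Type*} [SemiprimeFRing1 A]

lemma mul_eq_zero_of_inf_eq_zero {a b : A} (ha : 0 ≤ a) (hb : 0 ≤ b) (h : a ⊓ b = 0) :
    a * b = 0 := by
  have hba : b * a ⊓ b = 0 := disjoint_mul_left a b b h hb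
  have hab : a * b ⊓ b * a = 0 := disjoint_mul_left b (b * a) a (by rwa [inf_comm]) ha
  rwa [mul_comm b a, inf_idem] at hab

lemma mul_self_nonneg (a : A) : 0 ≤ a * a := by
  have hcross : a⁺ * a⁻ = 0 := mul_eq_zero_of_inf_eq_zero (posPart_nonneg a)
    (negPart_nonneg a) (posPart_inf_negPart_eq_zero a)
  have hsq : a * a = a⁺ * a⁺ + a⁻ * a⁻ := by
    conv_lhs => rw [← posPart_sub_negPart a]
    linear_combination (-2 : A) * hcross
  rw [hsq]
  exact add_nonneg (mul_nonneg _ _ (posPart_nonneg a) (posPart_nonneg a))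
    (mul_nonneg _ _ (negPart_nonneg a) (negPart_nonneg a))

instance : ZeroLEOneClass A := ⟨by simpa using mul_self_nonneg (1 : A)⟩

lemma le_one_of_mul_self_le {f : A} (h : f * f ≤ f) : f ≤ 1 := by
  set g := (f - 1)⁺
  set d := (f - 1)⁻
  have hgd : g * d = 0 := mul_eq_zero_of_inf_eq_zero (posPart_nonneg _) (negPart_nonneg _)
    (posPart_inf_negPart_eq_zero _)
  have hf1 : f = 1 + g - d := by rw [add_sub_assoc, posPart_sub_negPart, add_sub_cancel]
  -- `f - f * f = d - g - g * g - d * d` because `g * d = 0`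
  have hgd_le : g + (g * g + d * d) ≤ d := by
    rw [← sub_nonneg]
    have key : 0 ≤ f - f * f := sub_nonneg.2 h
    convert key using 1
    linear_combination (f + g - d) * hf1 - 2 * hgd
  have hg_le : g ≤ d :=
    (le_add_of_nonneg_right (add_nonneg (mul_self_nonneg g) (mul_self_nonneg d))).trans hgd_le
  have hg : g = 0 := by
    rw [← inf_eq_left.2 hg_le]
    exact posPart_inf_negPart_eq_zero (f - 1)
  rw [hf1, hg, add_zero]
  exact sub_le_self 1 (negPart_nonneg _)

end SemiprimeFRing1

/-- Every regular separating operator from a unital f-algebra into a semiprime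
f-algebra is almost contractive, with `ω_T = |T(e)|`. -/
theorem stmt3 {A B : Type*} [SemiprimeFRing1 A] [SemiprimeFRing B] (T : A → B)
    (hreg : ∃ P Q : A → B, (∀ x y : A, P (x + y) = P x + P y) ∧
      (∀ x y : A, Q (x + y) = Q x + Q y) ∧ (∀ x : A, 0 ≤ x → 0 ≤ P x) ∧
      (∀ x : A, 0 ≤ x → 0 ≤ Q x) ∧ ∀ x : A, T x = P x - Q x)
    (hsep : ∀ f g : A, |f| ⊓ |g| = 0 → |T f| ⊓ |T g| = 0) :
    (∀ f : A, |f| ≤ 1 → |T f| ≤ |T 1|) ∧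
      IsLUB {x : B | ∃ f : A, 0 ≤ f ∧ f * f ≤ f ∧ x = |T f|} |T 1| := by
  obtain ⟨P, Q, hP, hQ, hPpos, hQpos, hT⟩ := hreg
  obtain rfl : T = fun x => P x - Q x := funext hT
  set P' := AddMonoidHom.mk' P hP
  set Q' := AddMonoidHom.mk' Q hQ
  have hcontr : ∀ f : A, |f| ≤ 1 → |P f - Q f| ≤ |P 1 - Q 1| := fun f hf =>
    abs_map_le_abs_map_of_abs_le (P' - Q') hsep SemiprimeFRing.arch
      (fun _ ha hav => abs_sub_le_add_of_nonneg_of_le P' Q' hPpos hQpos ha hav) hf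
  refine ⟨hcontr, ?_, fun b hb => hb ⟨1, zero_le_one, (mul_one 1).le, rfl⟩⟩
  rintro _ ⟨f, hf0, hff, rfl⟩
  exact hcontr f ((abs_of_nonneg hf0).trans_le (SemiprimeFRing1.le_one_of_mul_self_le hff))
end

section
/- Let A be the f-algebra of piecewise polynomial functions on [0,∞) vanishing at 0, and T : A → ℝ defined by T(f) = f'(0⁺) (the right derivative at 0). Then T is a positive linear separating operator, but the set {T(f) : f ∈ A, 0 ≤ f ≤ 1} is unbounded in ℝ, so T is not almost contractive. -/
/-!
Near `0` a continuous piecewise polynomial function agrees with a single polynomial `p`: on an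
interval `(0, δ)` free of breakpoints the local polynomials are locally constant (two polynomials
agreeing on an open set are equal), hence constant by connectedness, and continuity extends the
agreement to `0`. Thus `T f = p'(0)` exists and `T` is linear. `T f ≥ 0` for `f ≥ 0` because `0`
is a minimum of `f` on `[0,∞)`. If `f g = 0` with germs `p`, `q` at `0`, then `p q = 0`, so
`p = 0` or `q = 0`. Finally `min (n x) 1` lies in the algebra, takes values in `[0,1]` and has
`T = n`.
-/

/-- `f : ℝ → ℝ` is piecewise polynomial on `[0,∞)`: away from a finite set of
breakpoints, `f` locally agrees with a polynomial. -/
def IsPiecewisePoly (f : ℝ → ℝ) : Prop :=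
  ∃ s : Finset ℝ, ∀ x ∈ Set.Ici (0 : ℝ) \ (s : Set ℝ), ∃ ε > (0 : ℝ),
    ∃ p : Polynomial ℝ, ∀ y ∈ Set.Ici (0 : ℝ), |y - x| < ε → f y = Polynomial.eval y p

open Set Filter Polynomial Topology

theorem Polynomial.eq_of_eventuallyEq_nhdsGT {p q : ℝ[X]} {a : ℝ}
    (h : (fun x => p.eval x) =ᶠ[𝓝[>] a] fun x => q.eval x) : p = q := by
  obtain ⟨b, hab, hsub⟩ := mem_nhdsGT_iff_exists_Ioo_subset.1 h
  exact eq_of_infinite_eval_eq p q ((Ioo_infinite hab).mono hsub)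

theorem Set.Finite.eventually_notMem_nhdsNE {X : Type*} [TopologicalSpace X] [T1Space X]
    {s : Set X} (hs : s.Finite) (a : X) : ∀ᶠ x in 𝓝[≠] a, x ∉ s := by
  have : (s \ {a})ᶜ ∈ 𝓝 a := hs.sdiff.isClosed.compl_mem_nhds (by simp)
  filter_upwards [nhdsWithin_le_nhds this, self_mem_nhdsWithin] with x hx hxa
  simp_all

theorem isPiecewisePoly_iff {f : ℝ → ℝ} :
    IsPiecewisePoly f ↔ ∃ s : Finset ℝ, ∀ x ∈ Ici (0 : ℝ) \ s,
      ∃ p : ℝ[X], f =ᶠ[𝓝[Ici 0] x] fun y => p.eval y := by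
  simp only [IsPiecewisePoly, EventuallyEq, eventually_nhdsWithin_iff, Metric.eventually_nhds_iff,
    Real.dist_eq]
  exact exists_congr fun s => forall₂_congr fun x _ =>
    ⟨fun ⟨ε, hε, p, h⟩ => ⟨p, ε, hε, fun y hy hy₀ => h y hy₀ hy⟩,
      fun ⟨p, ε, hε, h⟩ => ⟨ε, hε, p, fun y hy₀ hy => h hy hy₀⟩⟩

theorem IsPreconnected.exists_eqOn_eval_of_forall_eventuallyEq {f : ℝ → ℝ} {U : Set ℝ}
    (hU : IsPreconnected U) {x₀ : ℝ} (hx₀ : x₀ ∈ U)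
    (hloc : ∀ x ∈ U, ∃ p : ℝ[X], f =ᶠ[𝓝 x] fun y => p.eval y) :
    ∃ p : ℝ[X], EqOn f (fun y => p.eval y) U := by
  let SamePoly : ℝ → ℝ → Prop := fun x y =>
    ∃ p : ℝ[X], (f =ᶠ[𝓝 x] fun z => p.eval z) ∧ f =ᶠ[𝓝 y] fun z => p.eval z
  have unique {x : ℝ} {p q : ℝ[X]} (hp : f =ᶠ[𝓝 x] fun z => p.eval z)
      (hq : f =ᶠ[𝓝 x] fun z => q.eval z) : p = q :=
    eq_of_eventuallyEq_nhdsGT ((hp.symm.trans hq).filter_mono nhdsWithin_le_nhds)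
  obtain ⟨p, hp⟩ := hloc x₀ hx₀
  refine ⟨p, fun y hy => ?_⟩
  obtain ⟨q, hq₀, hqy⟩ : SamePoly x₀ y := by
    refine hU.induction₂ SamePoly (fun x hx => ?_) ?_ ?_ hx₀ hy
    · obtain ⟨q, hq⟩ := hloc x hx
      exact nhdsWithin_le_nhds (hq.eventually_nhds.mono fun y hy => ⟨q, hq, hy⟩)
    · rintro x y z - - - ⟨p, hpx, hpy⟩ ⟨q, hqy, hqz⟩
      exact ⟨p, hpx, unique hqy hpy ▸ hqz⟩
    · rintro x y - - ⟨p, hpx, hpy⟩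
      exact ⟨p, hpy, hpx⟩
  rw [unique hp hq₀]
  exact hqy.eq_of_nhds

theorem IsPiecewisePoly.exists_eventuallyEq_eval_nhdsGE_zero {f : ℝ → ℝ}
    (hf : IsPiecewisePoly f) (hc : ContinuousOn f (Ici 0)) :
    ∃ p : ℝ[X], f =ᶠ[𝓝[≥] 0] fun x => p.eval x := by
  obtain ⟨s, hs⟩ := isPiecewisePoly_iff.1 hf
  obtain ⟨δ, hδ : 0 < δ, hsδ⟩ := mem_nhdsGT_iff_exists_Ioo_subset.1
    ((s.finite_toSet.eventually_notMem_nhdsNE 0).filter_mono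
      (nhdsWithin_mono _ fun x hx => ne_of_gt hx))
  have hloc : ∀ x ∈ Ioo 0 δ, ∃ p : ℝ[X], f =ᶠ[𝓝 x] fun y => p.eval y := fun x hx => by
    rw [← nhdsWithin_eq_nhds.2 (Ici_mem_nhds hx.1)]
    exact hs x ⟨hx.1.le, hsδ hx⟩
  obtain ⟨p, hp⟩ := isPreconnected_Ioo.exists_eqOn_eval_of_forall_eventuallyEq (x₀ := δ / 2)
    ⟨by linarith, by linarith⟩ hloc
  have hIco : EqOn f (fun y => p.eval y) (Ico 0 δ) :=
    hp.of_subset_closure (hc.mono Ico_subset_Ici_self) p.continuousOn Ioo_subset_Ico_self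
      (by rw [closure_Ioo (ne_of_lt hδ)]; exact Ico_subset_Icc_self)
  exact ⟨p, mem_of_superset (Ico_mem_nhdsGE hδ) hIco⟩

theorem Polynomial.hasDerivWithinAt_of_eventuallyEq {f : ℝ → ℝ} {p : ℝ[X]} {s : Set ℝ} {x : ℝ}
    (h : f =ᶠ[𝓝[s] x] fun y => p.eval y) (hx : x ∈ s) :
    HasDerivWithinAt f (p.derivative.eval x) s x :=
  (p.hasDerivAt x).hasDerivWithinAt.congr_of_eventuallyEq_of_mem h hx

theorem derivWithin_Ici_nonneg_of_isMinOn {f : ℝ → ℝ} {a : ℝ} (h : IsMinOn f (Ici a) a) :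
    0 ≤ derivWithin f (Ici a) a := by
  rw [← fderivWithin_derivWithin]
  refine h.localize.fderivWithin_nonneg (mem_posTangentConeAt_of_segment_subset ?_)
  rw [segment_eq_Icc (by linarith)]
  exact Icc_subset_Ici_self

theorem derivWithin_Ici_mul_derivWithin_Ici_eq_zero {f g : ℝ → ℝ} {p q : ℝ[X]} {a : ℝ}
    (hf : f =ᶠ[𝓝[≥] a] fun x => p.eval x) (hg : g =ᶠ[𝓝[≥] a] fun x => q.eval x)
    (hfg : ∀ x ∈ Ici a, f x * g x = 0) :
    derivWithin f (Ici a) a * derivWithin g (Ici a) a = 0 := by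
  have hpq : p * q = 0 := by
    refine eq_of_eventuallyEq_nhdsGT (a := a) ?_
    filter_upwards [(hf.and hg).filter_mono (nhdsWithin_mono _ Ioi_subset_Ici_self),
      self_mem_nhdsWithin] with x ⟨hfx, hgx⟩ hx
    simpa [← hfx, ← hgx] using hfg x (Ioi_subset_Ici_self hx)
  have hs : UniqueDiffWithinAt ℝ (Ici a) a := uniqueDiffOn_Ici a a self_mem_Ici
  rw [(hasDerivWithinAt_of_eventuallyEq hf self_mem_Ici).derivWithin hs,
    (hasDerivWithinAt_of_eventuallyEq hg self_mem_Ici).derivWithin hs]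
  rcases mul_eq_zero.1 hpq with rfl | rfl <;> simp

theorem isPiecewisePoly_min_eval (p q : ℝ[X]) :
    IsPiecewisePoly fun x => min (p.eval x) (q.eval x) := by
  refine isPiecewisePoly_iff.2 ⟨(p - q).roots.toFinset, fun x hx => ?_⟩
  rcases lt_trichotomy (p.eval x) (q.eval x) with h | h | h
  · refine ⟨p, nhdsWithin_le_nhds ?_⟩
    filter_upwards [p.continuousAt.eventually_lt q.continuousAt h] with y hy
    exact min_eq_left hy.le
  · -- otherwise `x` would be a root of `p - q`, hence a breakpoint
    obtain rfl : p = q := by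
      by_contra hne
      exact hx.2 (by simp [sub_ne_zero.2 hne, h])
    exact ⟨p, Eventually.of_forall fun y => min_self _⟩
  · refine ⟨q, nhdsWithin_le_nhds ?_⟩
    filter_upwards [q.continuousAt.eventually_lt p.continuousAt h] with y hy
    exact min_eq_right hy.le

theorem derivWithin_Ici_min_mul_one (c : ℝ) :
    derivWithin (fun x => min (c * x) 1) (Ici 0) 0 = c := by
  have h : (fun x => min (c * x) 1) =ᶠ[𝓝[≥] 0] fun x => (C c * X).eval x := by
    filter_upwards [nhdsWithin_le_nhds ((continuous_const_mul c).continuousAt.eventually_lt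
      continuousAt_const (show c * 0 < 1 by simp))] with x hx
    simp [hx.le]
  simpa using (hasDerivWithinAt_of_eventuallyEq h self_mem_Ici).derivWithin
    (uniqueDiffOn_Ici 0 0 self_mem_Ici)

theorem not_bddAbove_derivWithin_Ici_of_le_one :
    ¬ BddAbove {y : ℝ | ∃ f : ℝ → ℝ, (ContinuousOn f (Ici 0) ∧ f 0 = 0 ∧ IsPiecewisePoly f) ∧
      (∀ x ∈ Ici (0 : ℝ), 0 ≤ f x ∧ f x ≤ 1) ∧ y = derivWithin f (Ici 0) 0} := by
  rw [not_bddAbove_iff]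
  intro B
  obtain ⟨n, hn, hBn⟩ : ∃ n : ℝ, 0 ≤ n ∧ B < n := ⟨max B 0 + 1, by positivity, by grind⟩
  refine ⟨n, ⟨fun x => min (n * x) 1, ⟨by fun_prop, by simp, ?_⟩, fun x hx => ?_,
    (derivWithin_Ici_min_mul_one n).symm⟩, hBn⟩
  · convert isPiecewisePoly_min_eval (C n * X) 1 using 3 <;> simp
  · exact ⟨le_min (mul_nonneg hn hx) zero_le_one, min_le_right _ _⟩

/-- On the f-algebra `A` of piecewise polynomial functions on `[0,∞)` vanishing at `0`,
the operator `T f = f'(0⁺)` is well defined (the right derivative at `0` exists),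
linear, positive and separating, but `{T f : f ∈ A, 0 ≤ f ≤ 1}` is unbounded, so `T` is
not almost contractive. -/
theorem stmt4 :
    ∀ Amem : (ℝ → ℝ) → Prop, (Amem = fun f => ContinuousOn f (Set.Ici 0) ∧ f 0 = 0 ∧
        IsPiecewisePoly f) →
    ∀ T : (ℝ → ℝ) → ℝ, (T = fun f => derivWithin f (Set.Ici 0) 0) →
      (∀ f, Amem f → ∃ L : ℝ, HasDerivWithinAt f L (Set.Ici 0) 0) ∧
      (∀ f g, Amem f → Amem g → T (f + g) = T f + T g) ∧
      (∀ (c : ℝ) f, Amem f → T (c • f) = c * T f) ∧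
      (∀ f, Amem f → (∀ x ∈ Set.Ici (0 : ℝ), 0 ≤ f x) → 0 ≤ T f) ∧
      (∀ f g, Amem f → Amem g → (∀ x ∈ Set.Ici (0 : ℝ), f x * g x = 0) →
        T f * T g = 0) ∧
      ¬ BddAbove {y : ℝ | ∃ f, Amem f ∧ (∀ x ∈ Set.Ici (0 : ℝ), 0 ≤ f x ∧ f x ≤ 1) ∧
        y = T f} := by
  rintro Amem rfl T rfl
  have hpoly (f : ℝ → ℝ) (hf : ContinuousOn f (Ici 0) ∧ f 0 = 0 ∧ IsPiecewisePoly f) :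
      ∃ p : ℝ[X], f =ᶠ[𝓝[≥] 0] fun x => p.eval x :=
    hf.2.2.exists_eventuallyEq_eval_nhdsGE_zero hf.1
  have hderiv (f : ℝ → ℝ) (hf : ContinuousOn f (Ici 0) ∧ f 0 = 0 ∧ IsPiecewisePoly f) :
      ∃ L : ℝ, HasDerivWithinAt f L (Ici 0) 0 :=
    let ⟨_, hp⟩ := hpoly f hf
    ⟨_, hasDerivWithinAt_of_eventuallyEq hp self_mem_Ici⟩
  refine ⟨hderiv, fun f g hf hg => ?_, fun c f _ => derivWithin_const_smul_field c f,
    fun f hf hpos => ?_, fun f g hf hg hfg => ?_, not_bddAbove_derivWithin_Ici_of_le_one⟩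
  · obtain ⟨_, hf'⟩ := hderiv f hf
    obtain ⟨_, hg'⟩ := hderiv g hg
    exact derivWithin_add hf'.differentiableWithinAt hg'.differentiableWithinAt
  · exact derivWithin_Ici_nonneg_of_isMinOn fun x hx => by simpa [hf.2.1] using hpos x hx
  · obtain ⟨p, hp⟩ := hpoly f hf
    obtain ⟨q, hq⟩ := hpoly g hg
    exact derivWithin_Ici_mul_derivWithin_Ici_eq_zero hp hq hfg
end

section
/- In a commutative semiprime f-algebra B, any component of a positive von Neumann regular element is von Neumann regular: if 0 ≤ ω is such that ω²v = ω for some v ∈ B, and 0 ≤ ω₁ ≤ ω with ω₁ ∧ (ω - ω₁) = 0, then ω₁²v = ω₁. -/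
/-
Write ω₂ = ω - ω₁. Disjoint positive elements of an f-algebra have product zero, so ω₁ ω₂ = 0,
i.e. ω₁ ω = ω₁². Multiplying ω² v = ω by ω₁ then gives ω₁³ v = ω₁². In a semiprime ring this
cancels to ω₁² v = ω₁: the defect d = ω₁² v - ω₁ satisfies ω₁ d = 0, hence d² = 0.
-/

namespace SemiprimeFRing

variable {A : Type*} [SemiprimeFRing A]

theorem sub_nonneg_of_le {a b : A} (h : a ≤ b) : 0 ≤ b - a := by
  simpa [neg_add_eq_sub] using add_le_add_left a b h (-a)

theorem mul_eq_zero_of_inf_eq_zero {a b : A} (ha : 0 ≤ a) (hb : 0 ≤ b) (hab : a ⊓ b = 0) :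
    a * b = 0 := by
  have hba : b ⊓ (b * a) = 0 := by
    rw [inf_comm]
    exact disjoint_mul_left a b b hab hb
  simpa [mul_comm b a] using disjoint_mul_left b (b * a) a hba ha

theorem mul_eq_mul_self_of_inf_sub_eq_zero {a b : A} (ha : 0 ≤ a) (hab : a ≤ b)
    (hcomp : a ⊓ (b - a) = 0) : a * b = a * a := by
  have h := mul_eq_zero_of_inf_eq_zero ha (sub_nonneg_of_le hab) hcomp
  rwa [mul_sub, sub_eq_zero] at h

theorem mul_eq_self_of_mul_self_mul_eq {x w : A} (h : x * x * w = x * x) : x * w = x := by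
  have hxd : x * (x * w - x) = 0 := by
    rw [mul_sub, ← mul_assoc, h, sub_self]
  set d := x * w - x
  have hdd : d * d = 0 :=
    calc (x * w - x) * d = w * (x * d) - x * d := by
          rw [sub_mul, mul_right_comm, mul_comm x d, mul_comm]
      _ = 0 := by rw [hxd, mul_zero, sub_zero]
  exact sub_eq_zero.mp (semiprime d hdd)

end SemiprimeFRing

theorem stmt8_general {B : Type*} [SemiprimeFRing B] (ω ω₁ v : B)
    (hvn : ω * ω * v = ω)
    (h1 : 0 ≤ ω₁) (h2 : ω₁ ≤ ω) (hcomp : ω₁ ⊓ (ω - ω₁) = 0) :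
    ω₁ * ω₁ * v = ω₁ := by
  have hω₁ω : ω₁ * ω = ω₁ * ω₁ := SemiprimeFRing.mul_eq_mul_self_of_inf_sub_eq_zero h1 h2 hcomp
  have hcube : ω₁ * ω₁ * (ω₁ * v) = ω₁ * ω₁ :=
    calc ω₁ * ω₁ * (ω₁ * v) = ω₁ * (ω₁ * ω₁) * v := by simp only [mul_assoc]
      _ = ω₁ * ω * ω * v := by rw [← hω₁ω, ← mul_assoc, hω₁ω]
      _ = ω₁ * (ω * ω * v) := by simp only [mul_assoc]
      _ = ω₁ * ω₁ := by rw [hvn, hω₁ω]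
  rw [mul_assoc]
  exact SemiprimeFRing.mul_eq_self_of_mul_self_mul_eq hcube

/-- Any component of a positive von Neumann regular element of a semiprime f-algebra
is von Neumann regular. -/
theorem stmt8 {B : Type*} [SemiprimeFRing B] (ω ω₁ v : B)
    (hω : 0 ≤ ω) (hvn : ω * ω * v = ω)
    (h1 : 0 ≤ ω₁) (h2 : ω₁ ≤ ω) (hcomp : ω₁ ⊓ (ω - ω₁) = 0) :
    ω₁ * ω₁ * v = ω₁ :=
  stmt8_general ω ω₁ v hvn h1 h2 hcomp
end

section
/- Let C₁, C₂ : A → B be algebra homomorphisms between commutative semiprime f-algebras such that C₁(f)C₂(f) = 0 for all f ∈ A. Then C = C₁ + C₂ satisfies C(f²) = C(f)² for all f, and hence (by polarization in a commutative setting) C is an algebra homomorphism. -/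
/-
Expanding `C₁ (f + g) * C₂ (f + g) = 0` shows that the mixed terms `C₁ f * C₂ g + C₁ g * C₂ f`
vanish. These are exactly the cross terms of `(C₁ f + C₂ f) * (C₁ g + C₂ g)`, so the product
reduces to `C₁ f * C₁ g + C₂ f * C₂ g = C₁ (f * g) + C₂ (f * g)`.
-/

theorem AddMonoidHom.mul_add_mul_eq_zero_of_forall_mul_eq_zero {A B : Type*}
    [AddZeroClass A] [NonUnitalNonAssocSemiring B] (φ ψ : A →+ B) (h : ∀ f, φ f * ψ f = 0)
    (f g : A) : φ f * ψ g + φ g * ψ f = 0 := by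
  have hfg := h (f + g)
  rwa [map_add, map_add, add_mul, mul_add, mul_add, h f, h g, zero_add, add_zero] at hfg

theorem NonUnitalRingHom.map_mul_add_map_mul_of_forall_mul_eq_zero {A B : Type*}
    [NonUnitalNonAssocSemiring A] [NonUnitalNonAssocCommSemiring B] (φ ψ : A →ₙ+* B)
    (h : ∀ f, φ f * ψ f = 0) (f g : A) :
    φ (f * g) + ψ (f * g) = (φ f + ψ f) * (φ g + ψ g) := by
  have hcross := AddMonoidHom.mul_add_mul_eq_zero_of_forall_mul_eq_zero
    φ.toAddMonoidHom ψ.toAddMonoidHom h f g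
  simp only [NonUnitalRingHom.coe_toAddMonoidHom] at hcross
  calc φ (f * g) + ψ (f * g)
      = φ f * φ g + ψ f * ψ g + (φ f * ψ g + φ g * ψ f) := by
        rw [map_mul, map_mul, hcross, add_zero]
    _ = (φ f + ψ f) * (φ g + ψ g) := by
        rw [add_mul, mul_add, mul_add, mul_comm (ψ f) (φ g)]
        abel

/-- If `C₁, C₂` are algebra homomorphisms with `C₁(f)C₂(f) = 0` for all `f`, then
`C = C₁ + C₂` preserves squares, hence is an algebra homomorphism. -/
theorem stmt11 {A B : Type*} [SemiprimeFRing A] [SemiprimeFRing B] (C₁ C₂ : A → B)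
    (h1add : ∀ x y : A, C₁ (x + y) = C₁ x + C₁ y)
    (h2add : ∀ x y : A, C₂ (x + y) = C₂ x + C₂ y)
    (h1mul : ∀ x y : A, C₁ (x * y) = C₁ x * C₁ y)
    (h2mul : ∀ x y : A, C₂ (x * y) = C₂ x * C₂ y)
    (horth : ∀ f : A, C₁ f * C₂ f = 0) :
    (∀ f : A, C₁ (f * f) + C₂ (f * f) = (C₁ f + C₂ f) * (C₁ f + C₂ f)) ∧
      (∀ f g : A, C₁ (f * g) + C₂ (f * g) = (C₁ f + C₂ f) * (C₁ g + C₂ g)) := by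
  let φ : A →ₙ+* B := { AddMonoidHom.mk' C₁ h1add with map_mul' := h1mul }
  let ψ : A →ₙ+* B := { AddMonoidHom.mk' C₂ h2add with map_mul' := h2mul }
  have hmul := φ.map_mul_add_map_mul_of_forall_mul_eq_zero ψ horth
  exact ⟨fun f => hmul f f, hmul⟩
end

section
/- Let B be a semiprime f-algebra and p ∈ B⁺. Suppose that for every unital f-algebra A with identity e and every regular separating operator T : A → B with T(e) = p, there exists an algebra homomorphism C : A → B with T = pC and pB = C(e)B. Then p is von Neumann regular. -/
namespace SemiprimeFRing

variable {B : Type*} [SemiprimeFRing B]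

theorem add_nonneg {a b : B} (ha : 0 ≤ a) (hb : 0 ≤ b) : 0 ≤ a + b :=
  ha.trans (by simpa using SemiprimeFRing.add_le_add_left 0 b hb a)

theorem nsmul_nonneg {a : B} (ha : 0 ≤ a) (n : ℕ) : 0 ≤ n • a := by
  induction n with
  | zero => simp
  | succ k ih => rw [succ_nsmul]; exact add_nonneg ih ha

theorem zsmul_nonneg {a : B} (ha : 0 ≤ a) {n : ℤ} (hn : 0 ≤ n) : 0 ≤ n • a := by
  lift n to ℕ using hn
  rw [natCast_zsmul]
  exact nsmul_nonneg ha n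

theorem exists_zsmul_eq_sub_of_nonneg {p : B} (hp : 0 ≤ p) :
    ∃ P Q : ℤ → B, (∀ x y : ℤ, P (x + y) = P x + P y) ∧
      (∀ x y : ℤ, Q (x + y) = Q x + Q y) ∧ (∀ x : ℤ, 0 ≤ x → 0 ≤ P x) ∧
      (∀ x : ℤ, 0 ≤ x → 0 ≤ Q x) ∧ ∀ x : ℤ, x • p = P x - Q x :=
  ⟨(· • p), 0, fun x y => add_zsmul p x y, fun _ _ => (add_zero 0).symm,
    fun _ hx => zsmul_nonneg hp hx, fun _ _ => le_rfl, fun _ => (sub_zero _).symm⟩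

end SemiprimeFRing

abbrev SemiprimeFRing1.ofArchimedean (R : Type*) [CommRing R] [LinearOrder R]
    [IsStrictOrderedRing R] [Archimedean R] : SemiprimeFRing1 R where
  add_le_add_left _ _ h c := add_le_add_right h c
  mul_nonneg _ _ := _root_.mul_nonneg
  disjoint_mul_left a b c hab hc := by
    rcases le_total a b with hle | hle
    · rw [inf_of_le_left hle] at hab
      subst hab
      simp [inf_of_le_left hle]
    · rw [inf_of_le_right hle] at hab
      subst hab
      exact inf_of_le_right (_root_.mul_nonneg hc hle)
  semiprime _ := mul_self_eq_zero.mp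
  arch a b h := not_lt.mp fun ha =>
    let ⟨n, hn⟩ := exists_lt_nsmul ha b
    (h n).not_gt hn

instance : SemiprimeFRing1 ℤ := .ofArchimedean ℤ

theorem zsmul_mul_zsmul_eq_zero {B : Type*} [NonUnitalNonAssocRing B] {f g : ℤ} (h : f * g = 0)
    (a : B) : f • a * g • a = 0 := by
  rcases mul_eq_zero.mp h with rfl | rfl <;> simp

theorem exists_mul_mul_eq_self {S : Type*} [Semigroup S] {p c : S} (hpc : p * c = p)
    (hc : ∃ x, c = p * x) : ∃ v, p * p * v = p := by
  obtain ⟨v, rfl⟩ := hc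
  exact ⟨v, by rw [mul_assoc, hpc]⟩

/-- Converse part of Theorem 6.1 of [AAB]: if `p ∈ B⁺` is such that every regular
separating operator `T : A → B` from a unital f-algebra with `T(e) = p` factors as
`T = pC` with `C` an algebra homomorphism and `pB = C(e)B`, then `p` is von Neumann
regular. -/
theorem stmt14 {B : Type*} [SemiprimeFRing B] (p : B) (hp : 0 ≤ p)
    (h : ∀ (A : Type) [SemiprimeFRing1 A] (T : A → B),
      (∃ P Q : A → B, (∀ x y : A, P (x + y) = P x + P y) ∧
        (∀ x y : A, Q (x + y) = Q x + Q y) ∧ (∀ x : A, 0 ≤ x → 0 ≤ P x) ∧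
        (∀ x : A, 0 ≤ x → 0 ≤ Q x) ∧ ∀ x : A, T x = P x - Q x) →
      (∀ f g : A, f * g = 0 → T f * T g = 0) →
      T 1 = p →
      ∃ C : A → B, (∀ x y : A, C (x + y) = C x + C y) ∧
        (∀ x y : A, C (x * y) = C x * C y) ∧ (∀ f : A, T f = p * C f) ∧
        {b : B | ∃ x : B, b = p * x} = {b : B | ∃ x : B, b = C 1 * x}) :
    ∃ v : B, p * p * v = p := by
  obtain ⟨C, -, hC_mul, hT_eq, hp_ideal⟩ :=
    h ℤ (· • p) (SemiprimeFRing.exists_zsmul_eq_sub_of_nonneg hp)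
      (fun _ _ hfg => zsmul_mul_zsmul_eq_zero hfg p) (one_zsmul p)
  have hC_idem : C 1 = C 1 * C 1 := by rw [← hC_mul, mul_one]
  have hC_mem : C 1 ∈ {b : B | ∃ x : B, b = p * x} := hp_ideal ▸ ⟨C 1, hC_idem⟩
  exact exists_mul_mul_eq_self (by simpa using (hT_eq 1).symm) hC_mem
end

section
/- Let T, S : A → B be two almost contractive regular separating operators between semiprime f-algebras that belong to a common vector space of such operators (so T + S and T − S are also separating). Then T(f)S(g) = 0 for all f, g ∈ A with fg = 0. -/
theorem mul_self_eq_zero_of_add_mul_add_eq_zero {R : Type*} [NonUnitalCommRing R] {a b c d : R}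
    (hac : a * c = 0) (hbd : b * d = 0) (h : (a + b) * (c + d) = 0) :
    (a * d) * (a * d) = 0 := by
  have hcross : a * d = -(b * c) := by
    rw [add_mul, mul_add, mul_add, hac, hbd, zero_add, add_zero] at h
    exact eq_neg_of_add_eq_zero_left h
  calc (a * d) * (a * d) = (a * d) * -(b * c) := by rw [← hcross]
    _ = -((a * c) * (b * d)) := by rw [mul_neg]; ac_rfl
    _ = 0 := by rw [hac, zero_mul, neg_zero]

theorem stmt16_general {A B : Type*} [SemiprimeFRing A] [SemiprimeFRing B] (T S : A → B)
    (hTsep : ∀ f g : A, f * g = 0 → T f * T g = 0)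
    (hSsep : ∀ f g : A, f * g = 0 → S f * S g = 0)
    (hTSsep : ∀ f g : A, f * g = 0 → (T f + S f) * (T g + S g) = 0) :
    ∀ f g : A, f * g = 0 → T f * S g = 0 := fun f g hfg =>
  SemiprimeFRing.semiprime _ <|
    mul_self_eq_zero_of_add_mul_add_eq_zero (hTsep f g hfg) (hSsep f g hfg) (hTSsep f g hfg)

/-- If `T, S` are almost contractive regular separating operators lying in a common
vector space of such operators (so `T + S` and `T - S` are separating as well), then
`T(f)S(g) = 0` whenever `fg = 0`. -/
theorem stmt16 {A B : Type*} [SemiprimeFRing A] [SemiprimeFRing B] (T S : A → B)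
    (hTreg : ∃ P Q : A → B, (∀ x y : A, P (x + y) = P x + P y) ∧
      (∀ x y : A, Q (x + y) = Q x + Q y) ∧ (∀ x : A, 0 ≤ x → 0 ≤ P x) ∧
      (∀ x : A, 0 ≤ x → 0 ≤ Q x) ∧ ∀ x : A, T x = P x - Q x)
    (hSreg : ∃ P Q : A → B, (∀ x y : A, P (x + y) = P x + P y) ∧
      (∀ x y : A, Q (x + y) = Q x + Q y) ∧ (∀ x : A, 0 ≤ x → 0 ≤ P x) ∧
      (∀ x : A, 0 ≤ x → 0 ≤ Q x) ∧ ∀ x : A, S x = P x - Q x)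
    (hTac : ∃ ω : B, ∀ f : A, 0 ≤ f → f * f ≤ f → |T f| ≤ ω)
    (hSac : ∃ ω : B, ∀ f : A, 0 ≤ f → f * f ≤ f → |S f| ≤ ω)
    (hTsep : ∀ f g : A, f * g = 0 → T f * T g = 0)
    (hSsep : ∀ f g : A, f * g = 0 → S f * S g = 0)
    (hTSsep : ∀ f g : A, f * g = 0 → (T f + S f) * (T g + S g) = 0)
    (hTSsep' : ∀ f g : A, f * g = 0 → (T f - S f) * (T g - S g) = 0) :
    ∀ f g : A, f * g = 0 → T f * S g = 0 :=
  stmt16_general T S hTsep hSsep hTSsep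
end
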